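/- arXiv:1111.2713 — 2 statements merged into one kernel-verified Lean document; each statement's English description precedes it below -/
import Mathlib

section
/- (Iterated Johnson bound) Let q be a prime power and let n, k, δ be integers with 0 ≤ δ ≤ k ≤ n. Then A_q(n, 2δ+2, k) ≤ ⌊((q^n−1)/(q^k−1)) · ⌊((q^{n−1}−1)/(q^{k−1}−1)) · ⌊ ⋯ ⌊(q^{n−k+δ+1}−1)/(q^{δ+1}−1)⌋ ⋯ ⌋⌋⌋, where the nested floors are taken over the k−δ factors (q^{n−i}−1)/(q^{k−i}−1) for i = 0, 1, …, k−δ−1, innermost first. -/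
open Module

/-- `C` is a constant dimension code in the Grassmannian `G_q(n,k)` with
minimum subspace distance at least `d`: all its elements are `k`-dimensional
subspaces of `F^n`, and `d_S(U,V) = 2k - 2 dim(U ⊓ V) ≥ d` for distinct `U,V ∈ C`. -/
def IsGrassmannCode (F : Type) [Field F] (n k d : ℕ)
    (C : Finset (Submodule F (Fin n → F))) : Prop :=
  (∀ U ∈ C, finrank F ↥U = k) ∧
  ∀ U ∈ C, ∀ V ∈ C, U ≠ V → d ≤ 2 * k - 2 * finrank F ↥(U ⊓ V)

/-- `A_q(n,d,k)`: the maximum size of an `(n,M,d,k)_q` code. -/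
noncomputable def maxCodeSize (F : Type) [Field F] (n d k : ℕ) : ℕ :=
  sSup {M | ∃ C : Finset (Submodule F (Fin n → F)), IsGrassmannCode F n k d C ∧ C.card = M}

/-- The iterated Johnson bound expression: `J δ = 1` and
`J j = ⌊((q^(n-k+j)-1)/(q^j-1)) ⬝ J (j-1)⌋` for `δ < j ≤ k` (innermost first). -/
noncomputable def johnsonIter (q n k δ : ℕ) : ℕ → ℕ
  | 0 => 1
  | j + 1 =>
    if j + 1 ≤ δ then 1
    else ⌊(((q : ℝ) ^ (n - k + (j + 1)) - 1) / ((q : ℝ) ^ (j + 1) - 1)) *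
      (johnsonIter q n k δ j : ℝ)⌋₊

/-!
Double count the pairs `(v, U)` with `U` a codeword and `v ≠ 0` a vector of `U`. Each codeword
contains `q^k - 1` such vectors, while the codewords through a fixed `v` are mapped injectively,
by a surjection `F^n → F^(n-1)` with kernel `⟨v⟩`, to a code of `(k-1)`-spaces with the same
minimum distance. Hence `A_q(n,d,k) (q^k - 1) ≤ (q^n - 1) A_q(n-1,d,k-1)`. Iterating this down to
dimension `δ`, where distance `2δ+2 > 2δ` leaves room for at most one codeword, gives the bound.
-/

open Finset Function LinearMap Submodule

section LinearAlgebra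

variable {K V W : Type*} [Field K] [AddCommGroup V] [Module K V] [AddCommGroup W] [Module K W]

theorem Submodule.finrank_map_add_finrank_ker [FiniteDimensional K V] {f : V →ₗ[K] W}
    {U : Submodule K V} (h : ker f ≤ U) :
    finrank K (U.map f) + finrank K (ker f) = finrank K U := by
  rw [← range_domRestrict, ← (comapSubtypeEquivOfLe h).finrank_eq, ← ker_domRestrict]
  exact (f.domRestrict U).finrank_range_add_finrank_ker

theorem Submodule.map_inf_of_ker_le {f : V →ₗ[K] W} (hf : Surjective f) {U U' : Submodule K V}
    (hU : ker f ≤ U) (hU' : ker f ≤ U') : (U ⊓ U').map f = U.map f ⊓ U'.map f := by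
  conv_lhs => rw [← comap_map_eq_self hU, ← comap_map_eq_self hU']
  exact map_inf_comap_of_surjective hf _ _

theorem Submodule.card_image_map_of_ker_le {f : V →ₗ[K] W} {C : Finset (Submodule K V)}
    (hC : ∀ U ∈ C, ker f ≤ U) : #(C.image (Submodule.map f)) = #C :=
  card_image_of_injOn fun U hU U' hU' h => by
    rw [← comap_map_eq_self (hC U hU), ← comap_map_eq_self (hC U' hU'), h]

theorem Submodule.exists_surjective_ker_eq [FiniteDimensional K V] (L : Submodule K V) {N : ℕ}
    (h : finrank K L + N = finrank K V) :
    ∃ f : V →ₗ[K] (Fin N → K), Surjective f ∧ ker f = L := by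
  obtain ⟨e⟩ : Nonempty ((V ⧸ L) ≃ₗ[K] (Fin N → K)) :=
    FiniteDimensional.nonempty_linearEquiv_of_finrank_eq <| by
      have := L.finrank_quotient_add_finrank
      rw [finrank_fin_fun]; omega
  exact ⟨e.toLinearMap ∘ₗ L.mkQ, e.surjective.comp L.mkQ_surjective, by
    rw [LinearEquiv.ker_comp, ker_mkQ]⟩

theorem Submodule.card_filter_mem_erase_zero [Fintype K] [Fintype V] [DecidableEq V]
    (U : Submodule K V) [DecidablePred (· ∈ U)] :
    #{x ∈ univ.erase 0 | x ∈ U} = Fintype.card K ^ finrank K U - 1 := by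
  rw [filter_erase, card_erase_of_mem (by simp [U.zero_mem]), ← Fintype.card_subtype,
    card_eq_pow_finrank (K := K)]

end LinearAlgebra

section Codes

variable {F : Type} [Field F] {n N N' k m d : ℕ}

theorem IsGrassmannCode.subset {C C' : Finset (Submodule F (Fin n → F))}
    (hC : IsGrassmannCode F n k d C) (h : C' ⊆ C) : IsGrassmannCode F n k d C' :=
  ⟨fun U hU => hC.1 U (h hU), fun U hU V hV => hC.2 U (h hU) V (h hV)⟩

theorem IsGrassmannCode.image_map {C : Finset (Submodule F (Fin N → F))}
    (hC : IsGrassmannCode F N m d C) {f : (Fin N → F) →ₗ[F] (Fin N' → F)}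
    (hf : Surjective f) (hker : ∀ U ∈ C, ker f ≤ U) :
    IsGrassmannCode F N' (m - finrank F (ker f)) d (C.image (Submodule.map f)) := by
  refine ⟨?_, ?_⟩
  · simp only [mem_image, forall_exists_index, and_imp, forall_apply_eq_imp_iff₂]
    intro U hU
    have := finrank_map_add_finrank_ker (hker U hU)
    rw [hC.1 U hU] at this
    omega
  · simp only [mem_image, forall_exists_index, and_imp, forall_apply_eq_imp_iff₂]
    intro U hU V hV hne
    have hUV : ker f ≤ U ⊓ V := le_inf (hker U hU) (hker V hV)
    have hdist := hC.2 U hU V hV (by rintro rfl; exact hne rfl)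
    have hrank := finrank_map_add_finrank_ker hUV
    have hle : finrank F ↥(U ⊓ V) ≤ m := hC.1 U hU ▸ finrank_mono inf_le_left
    rw [← map_inf_of_ker_le hf (hker U hU) (hker V hV)]
    omega

variable [Fintype F]

theorem bddAbove_card_isGrassmannCode :
    BddAbove {M | ∃ C : Finset (Submodule F (Fin n → F)),
      IsGrassmannCode F n k d C ∧ #C = M} :=
  ((Set.finite_range Finset.card).subset (by rintro _ ⟨C, -, rfl⟩; exact ⟨C, rfl⟩)).bddAbove

theorem IsGrassmannCode.card_le_maxCodeSize {C : Finset (Submodule F (Fin n → F))}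
    (hC : IsGrassmannCode F n k d C) : #C ≤ maxCodeSize F n d k :=
  le_csSup bddAbove_card_isGrassmannCode ⟨C, hC, rfl⟩

variable (F) (n k d) in
theorem exists_isGrassmannCode_card_eq_maxCodeSize :
    ∃ C, IsGrassmannCode F n k d C ∧ #C = maxCodeSize F n d k :=
  Nat.sSup_mem (s := {M | ∃ C : Finset (Submodule F (Fin n → F)),
    IsGrassmannCode F n k d C ∧ #C = M}) ⟨0, ∅, by simp [IsGrassmannCode]⟩
    bddAbove_card_isGrassmannCode

theorem maxCodeSize_le_one_of_lt (h : 2 * k < d) : maxCodeSize F n d k ≤ 1 := by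
  obtain ⟨C, hC, hcard⟩ := exists_isGrassmannCode_card_eq_maxCodeSize F n k d
  rw [← hcard, card_le_one]
  intro U hU V hV
  by_contra hne
  have := hC.2 U hU V hV hne
  omega

open scoped Classical in
theorem IsGrassmannCode.card_filter_mem_le {C : Finset (Submodule F (Fin N → F))}
    (hC : IsGrassmannCode F N m d C) {v : Fin N → F} (hv : v ≠ 0) :
    #{U ∈ C | v ∈ U} ≤ maxCodeSize F (N - 1) d (m - 1) := by
  have hspan : finrank F (span F {v}) = 1 := finrank_span_singleton hv
  have hN := (span F {v}).finrank_le
  rw [finrank_fin_fun] at hN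
  obtain ⟨f, hf, hfker⟩ := (span F {v}).exists_surjective_ker_eq (N := N - 1)
    (by rw [finrank_fin_fun]; omega)
  have hker : ∀ U ∈ {U ∈ C | v ∈ U}, ker f ≤ U := by
    simp [hfker, span_singleton_le_iff_mem]
  have hr : finrank F (ker f) = 1 := hfker ▸ hspan
  have := ((hC.subset (filter_subset _ _)).image_map hf hker).card_le_maxCodeSize
  rwa [hr, card_image_map_of_ker_le hker] at this

theorem IsGrassmannCode.card_mul_le {C : Finset (Submodule F (Fin N → F))}
    (hC : IsGrassmannCode F N m d C) :
    #C * (Fintype.card F ^ m - 1) ≤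
      (Fintype.card F ^ N - 1) * maxCodeSize F (N - 1) d (m - 1) := by
  classical
  have := card_mul_le_card_mul (fun U v => v ∈ U) (s := C) (t := univ.erase 0)
    (fun U hU => by rw [bipartiteAbove, card_filter_mem_erase_zero, hC.1 U hU])
    (fun v hv => hC.card_filter_mem_le (ne_of_mem_erase hv))
  rwa [card_erase_of_mem (mem_univ _), card_univ, Fintype.card_fun, Fintype.card_fin] at this

theorem maxCodeSize_mul_le :
    maxCodeSize F N d m * (Fintype.card F ^ m - 1) ≤
      (Fintype.card F ^ N - 1) * maxCodeSize F (N - 1) d (m - 1) := by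
  obtain ⟨C, hC, hcard⟩ := exists_isGrassmannCode_card_eq_maxCodeSize F N m d
  exact hcard ▸ hC.card_mul_le

end Codes

section JohnsonIter

variable {q n k δ j : ℕ}

theorem johnsonIter_of_le (h : j ≤ δ) : johnsonIter q n k δ j = 1 := by
  cases j <;> simp [johnsonIter, h]

theorem le_johnsonIter_succ (hq : 1 < q) (hj : δ ≤ j) {M : ℕ}
    (h : M * (q ^ (j + 1) - 1) ≤ (q ^ (n - k + (j + 1)) - 1) * johnsonIter q n k δ j) :
    M ≤ johnsonIter q n k δ (j + 1) := by
  have hpos : (0 : ℝ) < (q : ℝ) ^ (j + 1) - 1 := by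
    rw [sub_pos]; exact one_lt_pow₀ (by exact_mod_cast hq) (by omega)
  rw [johnsonIter, if_neg (by omega)]
  refine Nat.le_floor ?_
  rw [div_mul_eq_mul_div, le_div_iff₀ hpos]
  have hcast := (Nat.cast_le (α := ℝ)).2 h
  push_cast [Nat.one_le_pow _ _ (by omega : 0 < q)] at hcast
  linarith

end JohnsonIter

/-- **Iterated Johnson bound.** `A_q(n,2δ+2,k) ≤ J(k)` where the nested floors run over
the `k-δ` factors `(q^(n-i)-1)/(q^(k-i)-1)`, `i = 0,…,k-δ-1`, innermost first. -/
theorem iterated_johnson_bound (F : Type) [Field F] [Fintype F] (n k δ : ℕ)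
    (hδk : δ ≤ k) (hkn : k ≤ n) :
    maxCodeSize F n (2 * δ + 2) k ≤ johnsonIter (Fintype.card F) n k δ k := by
  have key : ∀ j, δ ≤ j →
      maxCodeSize F (n - k + j) (2 * δ + 2) j ≤ johnsonIter (Fintype.card F) n k δ j := by
    intro j hj
    induction j, hj using Nat.le_induction with
    | base => exact johnsonIter_of_le le_rfl ▸ maxCodeSize_le_one_of_lt (by omega)
    | succ j hj ih =>
      refine le_johnsonIter_succ Fintype.one_lt_card hj ?_
      calc _ ≤ _ := maxCodeSize_mul_le
        _ ≤ _ := Nat.mul_le_mul_left _ (by simpa using ih)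
  simpa [Nat.sub_add_cancel hkn] using key k hδk
end

section
/- Let q be a prime power and let n, t, r be integers with 1 ≤ r ≤ n − t and t ≥ 0. Then C_q(n+1, n+1−t, r) ≤ C_q(n, n−t, r). -/
open Module
set_option synthInstance.maxHeartbeats 1000000
set_option maxHeartbeats 1000000

/-- `C` is a `q`-covering design `C_q(n,k,r)`: a set of `k`-dimensional subspaces of
`F^n` such that every `r`-dimensional subspace is contained in at least one of them. -/
def IsCoveringDesign (F : Type) [Field F] (n k r : ℕ)
    (C : Finset (Submodule F (Fin n → F))) : Prop :=
  (∀ U ∈ C, finrank F ↥U = k) ∧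
  ∀ W : Submodule F (Fin n → F), finrank F ↥W = r → ∃ U ∈ C, W ≤ U

/-- `𝒞_q(n,k,r)`: the minimum size of a `q`-covering design `C_q(n,k,r)`. -/
noncomputable def minCoverSize (F : Type) [Field F] (n k r : ℕ) : ℕ :=
  sInf {M | ∃ C : Finset (Submodule F (Fin n → F)), IsCoveringDesign F n k r C ∧ C.card = M}

lemma exists_superspace {F V : Type*} [Field F] [AddCommGroup V] [Module F V]
    [FiniteDimensional F V] (k : ℕ) (h2 : k ≤ finrank F V) :
    ∀ d (W : Submodule F V), k - finrank F W = d → finrank F W ≤ k →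
      ∃ U : Submodule F V, W ≤ U ∧ finrank F ↥U = k := by
  intro d
  induction d with
  | zero =>
    intro W hd hle
    exact ⟨W, le_rfl, le_antisymm hle (by omega)⟩
  | succ d ih =>
    intro W hd hle
    have hlt : finrank F W < k := by omega
    have hlt' : finrank F W < finrank F V := lt_of_lt_of_le hlt h2
    obtain ⟨m, hm⟩ := Submodule.exists_of_finrank_lt W hlt'
    have hmW : m ∉ W := by simpa using hm 1 one_ne_zero
    have hm0 : m ≠ 0 := fun h => hmW (h ▸ W.zero_mem)
    have hdisj : Disjoint W (Submodule.span F {m}) :=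
      (Submodule.disjoint_span_singleton' hm0).mpr hmW
    have hrank : finrank F ↥(W ⊔ Submodule.span F {m}) = finrank F W + 1 := by
      have h1 := Submodule.finrank_sup_add_finrank_inf_eq W (Submodule.span F {m})
      rw [finrank_span_singleton hm0, disjoint_iff.mp hdisj, finrank_bot] at h1
      omega
    obtain ⟨U, hU1, hU2⟩ := ih (W ⊔ Submodule.span F {m}) (by omega) (by omega)
    exact ⟨U, le_trans le_sup_left hU1, hU2⟩

lemma exists_covering_design (F : Type) [Field F] [Fintype F] (n k r : ℕ)
    (hrk : r ≤ k) (hkn : k ≤ n) :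
    ∃ C : Finset (Submodule F (Fin n → F)), IsCoveringDesign F n k r C := by
  classical
  refine ⟨(Set.toFinite {U : Submodule F (Fin n → F) | finrank F ↥U = k}).toFinset, ?_, ?_⟩
  · intro U hU
    simpa using (Set.Finite.mem_toFinset _).mp hU
  · intro W hW
    have hkn' : k ≤ finrank F (Fin n → F) := by
      rw [Module.finrank_fin_fun]; exact hkn
    obtain ⟨U, hWU, hU⟩ := exists_superspace k hkn' (k - finrank F W) W rfl (by omega)
    exact ⟨U, (Set.Finite.mem_toFinset _).mpr hU, hWU⟩

/-- Monotonicity: `𝒞_q(n+1, n+1-t, r) ≤ 𝒞_q(n, n-t, r)`. -/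
theorem cover_monotone (F : Type) [Field F] [Fintype F] (n t r : ℕ)
    (hr : 1 ≤ r) (hrnt : r ≤ n - t) :
    minCoverSize F (n + 1) (n + 1 - t) r ≤ minCoverSize F n (n - t) r := by
  classical
  have htn : t + 1 ≤ n := by omega
  obtain ⟨C0, hC0⟩ := exists_covering_design F n (n - t) r hrnt (Nat.sub_le n t)
  refine le_csInf ⟨C0.card, C0, hC0, rfl⟩ ?_
  rintro M ⟨C, ⟨hCdim, hCcov⟩, rfl⟩
  set π := LinearMap.funLeft F F (Fin.castSucc : Fin n → Fin (n + 1)) with hπ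
  have hsurj : Function.Surjective π :=
    LinearMap.funLeft_surjective_of_injective F F _ (Fin.castSucc_injective n)
  have hker : finrank F ↥(LinearMap.ker π) = 1 := by
    have h1 := LinearMap.finrank_range_add_finrank_ker π
    rw [LinearMap.range_eq_top.mpr hsurj, finrank_top, Module.finrank_fin_fun,
      Module.finrank_fin_fun] at h1
    omega
  have hcomap : ∀ U : Submodule F (Fin n → F),
      finrank F ↥(Submodule.comap π U) = finrank F ↥U + 1 := by
    intro U
    have hle : LinearMap.ker π ≤ Submodule.comap π U := by
      intro x hx
      simp only [Submodule.mem_comap]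
      rw [LinearMap.mem_ker.mp hx]
      exact U.zero_mem
    have h1 := LinearMap.finrank_range_add_finrank_ker (π.domRestrict (Submodule.comap π U))
    rw [LinearMap.ker_domRestrict] at h1
    have h2 : LinearMap.range (π.domRestrict (Submodule.comap π U)) = Submodule.map π (Submodule.comap π U) :=
      LinearMap.range_domRestrict _ _
    rw [h2, Submodule.map_comap_eq_of_surjective hsurj] at h1
    have h3 : finrank F ↥(Submodule.comap (Submodule.comap π U).subtype (LinearMap.ker π)) =
        finrank F ↥(LinearMap.ker π) :=
      (Submodule.comapSubtypeEquivOfLe hle).finrank_eq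
    rw [h3, hker] at h1
    omega
  set C' : Finset (Submodule F (Fin (n + 1) → F)) := C.image (Submodule.comap π) with hC'
  have hdesign : IsCoveringDesign F (n + 1) (n + 1 - t) r C' := by
    constructor
    · intro U hU
      obtain ⟨V, hV, rfl⟩ := Finset.mem_image.mp hU
      rw [hcomap V, hCdim V hV]
      omega
    · intro W hW
      have hmaple : finrank F ↥(Submodule.map π W) ≤ r := by
        rw [← hW]
        exact Submodule.finrank_map_le π W
      have hrn : r ≤ finrank F (Fin n → F) := by
        rw [Module.finrank_fin_fun]; omega
      obtain ⟨X, hX1, hX2⟩ := exists_superspace r hrn (r - finrank F ↥(Submodule.map π W))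
        (Submodule.map π W) rfl hmaple
      obtain ⟨U, hU, hXU⟩ := hCcov X hX2
      refine ⟨Submodule.comap π U, Finset.mem_image_of_mem _ hU, ?_⟩
      exact le_trans (Submodule.le_comap_map π W) (Submodule.comap_mono (le_trans hX1 hXU))
  exact le_trans (Nat.sInf_le ⟨C', hdesign, rfl⟩) (Finset.card_image_le)
end
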